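/- Let a, b be nonzero complex numbers with |ab| < 1. Then f(−a, −b) = f(a³b, ab³) − a · f(a⁵b³, a⁻¹b), i.e., the m = 2 transformation expresses f(−a,−b) as the even dissection component minus the odd dissection component. -/

import Mathlib

/-! Splitting the series for `f(a, b)` over even and odd indices `n = 2m, 2m + 1` gives the
2-dissection `f(a, b) = f(a³b, ab³) + a f(a⁵b³, a⁻¹b)`; both pieces converge because their
parameters multiply to `(ab)⁴`. Replacing `(a, b)` by `(-a, -b)` leaves the parameters of the
pieces unchanged and only flips the sign of the prefactor `a`. -/

/-- Ramanujan's theta function `f(a,b) = ∑_{n ∈ ℤ} a^(n(n+1)/2) * b^(n(n-1)/2)`. -/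
noncomputable def ramanujanTheta (a b : ℂ) : ℂ :=
  ∑' n : ℤ, a ^ (n * (n + 1) / 2) * b ^ (n * (n - 1) / 2)

theorem HasSum.int_even_add_odd {M : Type*} [AddCommMonoid M] [TopologicalSpace M]
    [ContinuousAdd M] {f : ℤ → M} {m m' : M} (he : HasSum (fun k ↦ f (2 * k)) m)
    (ho : HasSum (fun k ↦ f (2 * k + 1)) m') : HasSum f (m + m') := by
  have := mul_right_injective₀ (two_ne_zero' ℤ)
  replace ho := ((add_left_injective 1).comp this).hasSum_range_iff.2 ho
  refine (this.hasSum_range_iff.2 he).add_isCompl ?_ ho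
  simpa [Function.comp_def] using Int.isCompl_even_odd

noncomputable def ramanujanThetaTerm (a b : ℂ) (n : ℤ) : ℂ :=
  a ^ (n * (n + 1) / 2) * b ^ (n * (n - 1) / 2)

section ramanujanThetaTerm

variable {a b : ℂ}

theorem ramanujanThetaTerm_eq {n p q : ℤ} (hp : n * (n + 1) = 2 * p)
    (hq : n * (n - 1) = 2 * q) : ramanujanThetaTerm a b n = a ^ p * b ^ q := by
  rw [ramanujanThetaTerm, Int.ediv_eq_of_eq_mul_right two_ne_zero hp,
    Int.ediv_eq_of_eq_mul_right two_ne_zero hq]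

theorem ramanujanThetaTerm_neg (a b : ℂ) (n : ℤ) :
    ramanujanThetaTerm a b (-n) = ramanujanThetaTerm b a n := by
  rw [ramanujanThetaTerm, ramanujanThetaTerm, mul_comm]
  ring_nf

theorem ramanujanThetaTerm_ne_zero (ha : a ≠ 0) (hb : b ≠ 0) (n : ℤ) :
    ramanujanThetaTerm a b n ≠ 0 :=
  mul_ne_zero (zpow_ne_zero _ ha) (zpow_ne_zero _ hb)

theorem ramanujanThetaTerm_add_one (ha : a ≠ 0) (hb : b ≠ 0) (n : ℤ) :
    ramanujanThetaTerm a b (n + 1) = a * (a * b) ^ n * ramanujanThetaTerm a b n := by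
  obtain ⟨p, hp⟩ := (Int.even_mul_succ_self n).two_dvd
  obtain ⟨q, hq⟩ := (Int.even_mul_pred_self n).two_dvd
  rw [ramanujanThetaTerm_eq hp hq, ramanujanThetaTerm_eq (p := p + n + 1) (q := q + n)
    (by linear_combination hp) (by linear_combination hq)]
  simp only [zpow_add₀ ha, zpow_add₀ hb, mul_zpow, zpow_one]
  ring

theorem ramanujanThetaTerm_two_mul (ha : a ≠ 0) (hb : b ≠ 0) (m : ℤ) :
    ramanujanThetaTerm a b (2 * m) = ramanujanThetaTerm (a ^ 3 * b) (a * b ^ 3) m := by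
  obtain ⟨p, hp⟩ := (Int.even_mul_succ_self m).two_dvd
  obtain ⟨q, hq⟩ := (Int.even_mul_pred_self m).two_dvd
  rw [ramanujanThetaTerm_eq hp hq, ramanujanThetaTerm_eq (p := 3 * p + q) (q := p + 3 * q)
    (by linear_combination 3 * hp + hq) (by linear_combination hp + 3 * hq)]
  simp only [zpow_add₀ ha, zpow_add₀ hb, mul_zpow, zpow_mul, zpow_ofNat]
  ring

theorem ramanujanThetaTerm_two_mul_add_one (ha : a ≠ 0) (hb : b ≠ 0) (m : ℤ) :
    ramanujanThetaTerm a b (2 * m + 1) = a * ramanujanThetaTerm (a ^ 5 * b ^ 3) (a⁻¹ * b) m := by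
  obtain ⟨p, hp⟩ := (Int.even_mul_succ_self m).two_dvd
  obtain ⟨q, hq⟩ := (Int.even_mul_pred_self m).two_dvd
  rw [ramanujanThetaTerm_eq hp hq, ramanujanThetaTerm_eq (p := 5 * p - q + 1) (q := 3 * p + q)
    (by linear_combination 5 * hp - hq) (by linear_combination 3 * hp + hq)]
  simp only [zpow_add₀ ha, zpow_sub₀ ha, zpow_add₀ hb, mul_zpow, zpow_mul, zpow_ofNat,
    inv_zpow]
  ring

theorem summable_ramanujanThetaTerm_natCast (ha : a ≠ 0) (hb : b ≠ 0) (hab : ‖a * b‖ < 1) :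
    Summable fun n : ℕ ↦ ramanujanThetaTerm a b n := by
  refine summable_of_ratio_test_tendsto_lt_one zero_lt_one
    (.of_forall fun n ↦ ramanujanThetaTerm_ne_zero ha hb n) ?_
  have hratio (n : ℕ) : ‖ramanujanThetaTerm a b ↑(n + 1)‖ / ‖ramanujanThetaTerm a b n‖ =
      ‖a‖ * ‖a * b‖ ^ n := by
    rw [Nat.cast_succ, ramanujanThetaTerm_add_one ha hb, norm_mul, norm_mul,
      mul_div_cancel_right₀ _ (norm_ne_zero_iff.2 (ramanujanThetaTerm_ne_zero ha hb n)),
      zpow_natCast, norm_pow]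
  simpa only [hratio, mul_zero] using
    (tendsto_pow_atTop_nhds_zero_of_lt_one (norm_nonneg _) hab).const_mul ‖a‖

theorem summable_ramanujanThetaTerm (ha : a ≠ 0) (hb : b ≠ 0) (hab : ‖a * b‖ < 1) :
    Summable (ramanujanThetaTerm a b) :=
  .of_nat_of_neg (summable_ramanujanThetaTerm_natCast ha hb hab) <|
    (summable_ramanujanThetaTerm_natCast hb ha (by rwa [mul_comm])).congr fun n ↦
      (ramanujanThetaTerm_neg a b n).symm

end ramanujanThetaTerm

theorem hasSum_ramanujanTheta {a b : ℂ} (ha : a ≠ 0) (hb : b ≠ 0) (hab : ‖a * b‖ < 1) :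
    HasSum (ramanujanThetaTerm a b) (ramanujanTheta a b) :=
  (summable_ramanujanThetaTerm ha hb hab).hasSum

theorem ramanujanTheta_eq_even_add_odd (a b : ℂ) (ha : a ≠ 0) (hb : b ≠ 0)
    (hab : ‖a * b‖ < 1) :
    ramanujanTheta a b =
      ramanujanTheta (a ^ 3 * b) (a * b ^ 3) + a * ramanujanTheta (a ^ 5 * b ^ 3) (a⁻¹ * b) := by
  have hab4 : ‖(a * b) ^ 4‖ < 1 := by
    rw [norm_pow]; exact pow_lt_one₀ (norm_nonneg _) hab four_ne_zero
  have heven : HasSum (fun m ↦ ramanujanThetaTerm a b (2 * m))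
      (ramanujanTheta (a ^ 3 * b) (a * b ^ 3)) := by
    simpa only [ramanujanThetaTerm_two_mul ha hb] using
      hasSum_ramanujanTheta (by positivity) (by positivity)
        (by rwa [← show (a * b) ^ 4 = a ^ 3 * b * (a * b ^ 3) by ring])
  have hodd : HasSum (fun m ↦ ramanujanThetaTerm a b (2 * m + 1))
      (a * ramanujanTheta (a ^ 5 * b ^ 3) (a⁻¹ * b)) := by
    simpa only [ramanujanThetaTerm_two_mul_add_one ha hb] using
      (hasSum_ramanujanTheta (by positivity) (by positivity)
        (by rwa [← show (a * b) ^ 4 = a ^ 5 * b ^ 3 * (a⁻¹ * b) by field_simp])).mul_left a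
  exact (heven.int_even_add_odd hodd).tsum_eq

theorem theta_neg_transform (a b : ℂ) (ha : a ≠ 0) (hb : b ≠ 0)
    (hab : ‖a * b‖ < 1) :
    ramanujanTheta (-a) (-b) =
      ramanujanTheta (a ^ 3 * b) (a * b ^ 3) - a * ramanujanTheta (a ^ 5 * b ^ 3) (a⁻¹ * b) := by
  rw [ramanujanTheta_eq_even_add_odd (-a) (-b) (neg_ne_zero.2 ha) (neg_ne_zero.2 hb)
    (by rwa [neg_mul_neg])]
  ring_nf
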